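/- Let v ∈ V, let i ∈ win⁻_v, and let x = next_v(i). Then i ∈ win⁻_x and next_x(i) = x. -/

import Mathlib

/-!
Write `x = next_v(i)`. An s-maximal vertex of `T_x` that lies on the chain from `x` to `i` is
already s-maximal in `T_v`, because its cost beats that of `x`, which in turn beats every cost on
`T[v,x)`. Hence `i`, which is not s-maximal in `T_v`, is not s-maximal in `T_x` either, and any
s-maximal vertex of `T[x,i)` is an s-maximal vertex of `T[v,i)`, so lies below `x`. The window
condition passes from `v` to `x` because the weights are nonnegative and `T[x,i] ⊆ T[v,i]`.
-/

open Finset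
open scoped Classical

noncomputable section

variable {V : Type} [Fintype V] [PartialOrder V]

/-- The chain `T[v,i]` : all vertices `p` with `v ≤ p ≤ i`. -/
def chainCC (v i : V) : Finset V := univ.filter (fun p => v ≤ p ∧ p ≤ i)

/-- The chain `T[v,i)` : `T[v,i]` without `i`. -/
def chainCO (v i : V) : Finset V := (chainCC v i).erase i

/-- `u` is s-maximal in `T_v`. -/
def SMax (s : V → ℝ) (v u : V) : Prop := v ≤ u ∧ ∀ p ∈ chainCO v u, s p < s u

/-- The window of `v`. -/
def win (w : V → ℝ) (w0 : ℝ) (v : V) : Finset V :=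
  univ.filter (fun i => v ≤ i ∧ ∑ j ∈ chainCC v i, w j ≤ w0)

/-- `win*_v`: the s-maximal vertices of the window of `v`. -/
def winStar (w : V → ℝ) (w0 : ℝ) (s : V → ℝ) (v : V) : Finset V :=
  (win w w0 v).filter (fun i => SMax s v i)

/-- `win⁻_v = win_v \ win*_v`. -/
def winMinus (w : V → ℝ) (w0 : ℝ) (s : V → ℝ) (v : V) : Finset V :=
  win w w0 v \ winStar w w0 s v

/-- `next_v(u)`: the greatest (closest to `u`) s-maximal element of `T[v,u)`,
if such a greatest element exists (junk value `v` otherwise). -/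
def nxt (s : V → ℝ) (v u : V) : V :=
  if h : ∃ x ∈ chainCO v u, SMax s v x ∧ ∀ y ∈ chainCO v u, SMax s v y → y ≤ x
  then h.choose else v

end

section RootedTree

variable {V : Type} [Fintype V] [PartialOrder V]

lemma mem_chainCC {v i p : V} : p ∈ chainCC v i ↔ v ≤ p ∧ p ≤ i := by
  simp [chainCC]

lemma mem_chainCO {v i p : V} : p ∈ chainCO v i ↔ v ≤ p ∧ p ≤ i ∧ p ≠ i := by
  simp only [chainCO, mem_erase, mem_chainCC]
  tauto

lemma chainCC_subset_chainCC {v x i : V} (hvx : v ≤ x) : chainCC x i ⊆ chainCC v i :=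
  fun _ hp => mem_chainCC.2 ⟨hvx.trans (mem_chainCC.1 hp).1, (mem_chainCC.1 hp).2⟩

lemma chainCO_subset_chainCO {v x i : V} (hvx : v ≤ x) : chainCO x i ⊆ chainCO v i :=
  erase_subset_erase i (chainCC_subset_chainCC hvx)

lemma SMax.refl (s : V → ℝ) (v : V) : SMax s v v :=
  ⟨le_rfl, fun _ hp => absurd (le_antisymm (mem_chainCO.1 hp).2.1 (mem_chainCO.1 hp).1)
    (mem_chainCO.1 hp).2.2⟩

lemma SMax.trans (htree : ∀ a b c : V, a ≤ c → b ≤ c → a ≤ b ∨ b ≤ a) {s : V → ℝ}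
    {v x p : V} (hvx : SMax s v x) (hxp : SMax s x p) : SMax s v p := by
  obtain rfl | hne := eq_or_ne x p
  · exact hvx
  refine ⟨hvx.1.trans hxp.1, fun q hq => ?_⟩
  obtain ⟨hvq, hqp, hqne⟩ := mem_chainCO.1 hq
  have hsxp : s x < s p := hxp.2 x (mem_chainCO.2 ⟨le_rfl, hxp.1, hne⟩)
  rcases htree q x p hqp hxp.1 with hqx | hxq
  · obtain rfl | hqx := hqx.eq_or_lt
    · exact hsxp
    · exact (hvx.2 q (mem_chainCO.2 ⟨hvq, hqx.le, hqx.ne⟩)).trans hsxp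
  · exact hxp.2 q (mem_chainCO.2 ⟨hxq, hqp, hqne⟩)

lemma mem_win_of_le {w : V → ℝ} (hw : ∀ j, 0 ≤ w j) {w0 : ℝ} {v x i : V}
    (hi : i ∈ win w w0 v) (hvx : v ≤ x) (hxi : x ≤ i) : i ∈ win w w0 x := by
  simp only [win, mem_filter, mem_univ, true_and] at hi ⊢
  exact ⟨hxi, le_trans (sum_le_sum_of_subset_of_nonneg (chainCC_subset_chainCC hvx)
    fun j _ _ => hw j) hi.2⟩

lemma mem_winMinus {w : V → ℝ} {w0 : ℝ} {s : V → ℝ} {v i : V} :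
    i ∈ winMinus w w0 s v ↔ i ∈ win w w0 v ∧ ¬ SMax s v i := by
  simp only [winMinus, winStar, mem_sdiff, mem_filter]
  tauto

lemma exists_greatest_smax (htree : ∀ a b c : V, a ≤ c → b ≤ c → a ≤ b ∨ b ≤ a)
    (s : V → ℝ) {v i : V} (hvi : v ≤ i) (hne : v ≠ i) :
    ∃ x ∈ chainCO v i, SMax s v x ∧ ∀ y ∈ chainCO v i, SMax s v y → y ≤ x := by
  set S := (chainCO v i).filter (SMax s v)
  have hvS : v ∈ S := mem_filter.2 ⟨mem_chainCO.2 ⟨le_rfl, hvi, hne⟩, SMax.refl s v⟩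
  obtain ⟨m, hmS, hmax⟩ := S.exists_maximal ⟨v, hvS⟩
  obtain ⟨hm, hsm⟩ := mem_filter.1 hmS
  refine ⟨m, hm, hsm, fun y hy hsy => ?_⟩
  rcases htree y m i (mem_chainCO.1 hy).2.1 (mem_chainCO.1 hm).2.1 with hym | hmy
  · exact hym
  · exact hmax (mem_filter.2 ⟨hy, hsy⟩) hmy

lemma nxt_spec {s : V → ℝ} {v i : V}
    (hex : ∃ x ∈ chainCO v i, SMax s v x ∧ ∀ y ∈ chainCO v i, SMax s v y → y ≤ x) :
    nxt s v i ∈ chainCO v i ∧ SMax s v (nxt s v i) ∧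
      ∀ y ∈ chainCO v i, SMax s v y → y ≤ nxt s v i := by
  rw [nxt, dif_pos hex]
  exact hex.choose_spec

lemma nxt_eq_of_greatest {s : V → ℝ} {v i x : V} (hx : x ∈ chainCO v i) (hsx : SMax s v x)
    (hgreatest : ∀ y ∈ chainCO v i, SMax s v y → y ≤ x) : nxt s v i = x := by
  obtain ⟨hn, hsn, hnmax⟩ := nxt_spec ⟨x, hx, hsx, hgreatest⟩
  exact le_antisymm (hgreatest _ hn hsn) (hnmax x hx hsx)

end RootedTree

theorem stmt_0_general (V : Type) [Fintype V] [PartialOrder V]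
    (htree : ∀ a b c : V, a ≤ c → b ≤ c → a ≤ b ∨ b ≤ a)
    (w : V → ℝ) (s : V → ℝ) (w0 : ℝ)
    (hw : ∀ i : V, 0 ≤ w i)
    (v i : V) (hi : i ∈ winMinus w w0 s v)
    (x : V) (hx : x = nxt s v i) :
    i ∈ winMinus w w0 s x ∧ nxt s x i = x := by
  obtain ⟨hiw, hnsm⟩ := mem_winMinus.1 hi
  have hvi : v ≤ i := (mem_filter.1 hiw).2.1
  have hvne : v ≠ i := by
    rintro rfl
    exact hnsm (SMax.refl s v)
  obtain ⟨hxmem, hsx, hxmax⟩ := nxt_spec (exists_greatest_smax htree s hvi hvne)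
  rw [← hx] at hxmem hsx hxmax
  obtain ⟨hvx, hxi, hxne⟩ := mem_chainCO.1 hxmem
  refine ⟨mem_winMinus.2 ⟨mem_win_of_le hw hiw hvx hxi, fun h => hnsm (hsx.trans htree h)⟩, ?_⟩
  exact nxt_eq_of_greatest (mem_chainCO.2 ⟨le_rfl, hxi, hxne⟩) (SMax.refl s x)
    fun y hy hsy => hxmax y (chainCO_subset_chainCO hvx hy) (hsx.trans htree hsy)

theorem stmt_0 (V : Type) [Fintype V] [Nonempty V] [PartialOrder V]
    (htree : ∀ a b c : V, a ≤ c → b ≤ c → a ≤ b ∨ b ≤ a)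
    (w : V → ℝ) (s : V → ℝ) (w0 : ℝ)
    (hw : ∀ i : V, 0 ≤ w i) (hw0 : 0 ≤ w0)
    (v i : V) (hi : i ∈ winMinus w w0 s v)
    (x : V) (hx : x = nxt s v i) :
    i ∈ winMinus w w0 s x ∧ nxt s x i = x :=
  stmt_0_general V htree w s w0 hw v i hi x hx
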